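/- Let X₁,…,X_N be independent chi-squared random variables each with k degrees of freedom, and σ₁ ≥ ⋯ ≥ σ_N ≥ 0 with S := Σ_j σ_j². Then for any τ > 1, Prob((1/k) Σ_j σ_j² X_j ≥ τ² S) ≤ exp(−(k/2) ρ (τ−1)²), where ρ = S/σ₁². -/

import Mathlib

open MeasureTheory ProbabilityTheory

/-- The chi-squared measure with `k` degrees of freedom, defined by its density
`t ^ (k/2 − 1) e^{−t/2} / (2^{k/2} Γ(k/2))` on `(0, ∞)`. -/
noncomputable def chiSqMeasure (k : ℕ) : Measure ℝ :=
  (volume.restrict (Set.Ioi (0 : ℝ))).withDensity fun t =>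
    ENNReal.ofReal (t ^ ((k : ℝ) / 2 - 1) * Real.exp (-t / 2) /
      (2 ^ ((k : ℝ) / 2) * Real.Gamma ((k : ℝ) / 2)))

open Real Set
open scoped ENNReal NNReal

lemma chiSq_meas (k : ℕ) : Measurable (fun t : ℝ => t ^ ((k : ℝ) / 2 - 1) * Real.exp (-t / 2) /
      (2 ^ ((k : ℝ) / 2) * Real.Gamma ((k : ℝ) / 2))) := by
  fun_prop

lemma chiSq_eq (k : ℕ) : chiSqMeasure k = (volume.restrict (Set.Ioi (0 : ℝ))).withDensity fun t =>
    ((t ^ ((k : ℝ) / 2 - 1) * Real.exp (-t / 2) /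
      (2 ^ ((k : ℝ) / 2) * Real.Gamma ((k : ℝ) / 2))).toNNReal : ℝ≥0∞) := rfl

lemma chiSq_base_integrable (k : ℕ) (hk : 0 < k) {s : ℝ} (hs : s < 1/2) :
    IntegrableOn (fun t : ℝ => t ^ ((k:ℝ)/2 - 1) * Real.exp (-((1/2 - s) * t)))
      (Ioi 0) volume := by
  have hκ1 : (-1:ℝ) < (k:ℝ)/2 - 1 := by
    have : (1:ℝ) ≤ (k:ℝ) := by exact_mod_cast hk
    linarith
  have hr : 0 < 1/2 - s := by linarith
  have base := integrableOn_rpow_mul_exp_neg_mul_rpow (p := 1) hκ1 one_pos hr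
  refine base.congr_fun (fun t ht => ?_) measurableSet_Ioi
  simp only [Real.rpow_one, neg_mul]

lemma chiSq_pointwise (k : ℕ) (s : ℝ) {t : ℝ} (ht : t ∈ Ioi (0:ℝ)) :
    (t ^ ((k : ℝ) / 2 - 1) * Real.exp (-t / 2) /
      (2 ^ ((k : ℝ) / 2) * Real.Gamma ((k : ℝ) / 2))).toNNReal • Real.exp (s * t) =
    (1 / (2 ^ ((k : ℝ)/2) * Real.Gamma ((k : ℝ)/2))) *
      (t ^ ((k:ℝ)/2 - 1) * Real.exp (-((1/2 - s) * t))) := by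
  have ht' : (0:ℝ) ≤ t ^ ((k:ℝ)/2 - 1) := Real.rpow_nonneg (le_of_lt ht) _
  have hΓ : 0 < Real.Gamma ((k : ℝ)/2 : ℝ) ∨ True := Or.inr trivial
  have hnn : (0:ℝ) ≤ t ^ ((k : ℝ) / 2 - 1) * Real.exp (-t / 2) /
      (2 ^ ((k : ℝ) / 2) * Real.Gamma ((k : ℝ) / 2)) := by
    rcases Nat.eq_zero_or_pos k with h0 | hpos
    · subst h0; simp [Real.Gamma_zero]
    · have : 0 < (k:ℝ)/2 := by positivity
      have := Real.Gamma_pos_of_pos this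
      positivity
  rw [NNReal.smul_def, Real.coe_toNNReal _ hnn, smul_eq_mul]
  have he : Real.exp (-((1/2 - s) * t)) = Real.exp (-t/2) * Real.exp (s*t) := by
    rw [← Real.exp_add]; congr 1; ring
  rw [he]; ring

lemma chiSq_exp_integrable (k : ℕ) (hk : 0 < k) {s : ℝ} (hs : s < 1/2) :
    Integrable (fun t => Real.exp (s * t)) (chiSqMeasure k) := by
  rw [chiSq_eq]
  rw [integrable_withDensity_iff_integrable_smul (chiSq_meas k).real_toNNReal]
  refine (((chiSq_base_integrable k hk hs).const_mul
    (1 / (2 ^ ((k : ℝ)/2) * Real.Gamma ((k : ℝ)/2)))).congr ?_)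
  filter_upwards [ae_restrict_mem measurableSet_Ioi] with t ht
  exact (chiSq_pointwise k s ht).symm

lemma chiSq_exp_integral (k : ℕ) (hk : 0 < k) {s : ℝ} (hs : s < 1/2) :
    ∫ t, Real.exp (s * t) ∂(chiSqMeasure k) = (1 - 2*s) ^ (-((k:ℝ)/2)) := by
  have hκ : 0 < (k : ℝ)/2 := by positivity
  have hΓ : 0 < Real.Gamma ((k : ℝ)/2) := Real.Gamma_pos_of_pos hκ
  have h2κ : 0 < (2:ℝ) ^ ((k : ℝ)/2) := by positivity
  have hr : 0 < 1/2 - s := by linarith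
  have h2 : (0:ℝ) < 1 - 2*s := by linarith
  rw [chiSq_eq, integral_withDensity_eq_integral_smul (chiSq_meas k).real_toNNReal]
  rw [setIntegral_congr_fun (g := fun t => (1 / (2 ^ ((k : ℝ)/2) * Real.Gamma ((k : ℝ)/2))) *
      (t ^ ((k:ℝ)/2 - 1) * Real.exp (-((1/2 - s) * t)))) measurableSet_Ioi
      (fun t ht => chiSq_pointwise k s ht)]
  rw [integral_const_mul, integral_rpow_mul_exp_neg_mul_Ioi hκ hr]
  rw [show 1/(1/2 - s) = 2 * (1 - 2*s)⁻¹ by field_simp]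
  rw [Real.mul_rpow (by norm_num) (by positivity), Real.rpow_neg h2.le,
    ← Real.inv_rpow h2.le]
  field_simp

lemma rpow_neg_le_exp_aux {κ τ x : ℝ} (hκ : 0 ≤ κ) (hτ : 0 < τ) (hx : 0 ≤ x)
    (hy : τ⁻¹ ≤ 1 - x) : (1 - x) ^ (-κ) ≤ Real.exp (κ * (τ * x)) := by
  have hy0 : 0 < 1 - x := lt_of_lt_of_le (by positivity) hy
  rw [Real.rpow_def_of_pos hy0, Real.exp_le_exp]
  have hlog : -Real.log (1 - x) ≤ τ * x := by
    have h1 : Real.log (1 - x)⁻¹ ≤ (1 - x)⁻¹ - 1 :=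
      Real.log_le_sub_one_of_pos (by positivity)
    rw [Real.log_inv] at h1
    have h2 : (1 - x)⁻¹ - 1 = x * (1 - x)⁻¹ := by field_simp; ring
    have h3 : (1 - x)⁻¹ ≤ τ := by
      calc (1 - x)⁻¹ ≤ (τ⁻¹)⁻¹ := by
            apply inv_anti₀ (by positivity) hy
        _ = τ := inv_inv τ
    nlinarith [mul_le_mul_of_nonneg_left h3 hx]
  nlinarith [mul_le_mul_of_nonneg_left hlog hκ]


/-- Concentration (overestimation) bound: for independent chi-squared variables
`X j` with `k` degrees of freedom and weights `σ 1 ≥ ⋯ ≥ σ N ≥ 0`, `S = ∑ σ j ^ 2`,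
`ρ = S / σ 1 ^ 2`, and any `τ > 1`,
`Prob((1/k) ∑ j, σ j ^ 2 * X j ≥ τ² S) ≤ exp(−(k/2) ρ (τ−1)²)`. -/
theorem weighted_chiSq_sum_upper_tail_bound
    {N : ℕ} [NeZero N] {Θ : Type*} [MeasurableSpace Θ] (P : Measure Θ)
    [IsProbabilityMeasure P] (k : ℕ) (hk : 0 < k)
    (X : Fin N → Θ → ℝ) (hmeas : ∀ j, Measurable (X j))
    (hindep : iIndepFun X P)
    (hdist : ∀ j, Measure.map (X j) P = chiSqMeasure k)
    (σ : Fin N → ℝ) (hσmono : Antitone σ) (hσ0 : ∀ j, 0 ≤ σ j) (hσ1 : 0 < σ 0)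
    (S ρ : ℝ) (hS : S = ∑ j, (σ j) ^ 2) (hρ : ρ = S / (σ 0) ^ 2)
    (τ : ℝ) (hτ : 1 < τ) :
    P {θ | (1 / (k : ℝ)) * ∑ j, σ j ^ 2 * X j θ ≥ τ ^ 2 * S}
      ≤ ENNReal.ofReal (Real.exp (-(k : ℝ) / 2 * ρ * (τ - 1) ^ 2)) := by
  have hk0 : (0:ℝ) < k := by exact_mod_cast hk
  have hτ0 : (0:ℝ) < τ := by linarith
  have hσ0sq : (0:ℝ) < σ 0 ^ 2 := by positivity
  set lam : ℝ := (τ - 1) / (2 * τ * σ 0 ^ 2) with hlam_def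
  have hlam : 0 < lam := div_pos (by linarith) (by positivity)
  have hσle : ∀ j, σ j ^ 2 ≤ σ 0 ^ 2 := fun j =>
    pow_le_pow_left₀ (hσ0 j) (hσmono (Fin.zero_le j)) 2
  have hA : lam * σ 0 ^ 2 = (τ - 1) / (2 * τ) := by
    rw [hlam_def]; field_simp
  have hsj_le : ∀ j, lam * σ j ^ 2 ≤ (τ - 1) / (2 * τ) := fun j => by
    rw [← hA]; exact mul_le_mul_of_nonneg_left (hσle j) hlam.le
  have hhalf : (τ - 1) / (2 * τ) < 1 / 2 := by
    rw [div_lt_div_iff₀ (by positivity) (by norm_num)]; linarith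
  have hsj : ∀ j, lam * σ j ^ 2 < 1/2 := fun j => lt_of_le_of_lt (hsj_le j) hhalf
  have hsj0 : ∀ j, 0 ≤ lam * σ j ^ 2 := fun j => by
    have := hσ0 j; positivity
  have hτdiv : (τ - 1) / (2 * τ) = (1 - τ⁻¹) / 2 := by field_simp
  -- the scaled variables
  set Y : Fin N → Θ → ℝ := fun j => (fun x : ℝ => σ j ^ 2 * x) ∘ X j with hY_def
  have hYmeas : ∀ j, Measurable (Y j) := fun j => (measurable_const_mul _).comp (hmeas j)
  have hYindep : iIndepFun Y P :=
    hindep.comp _ (fun j => measurable_const_mul _)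
  have hcont : ∀ s : ℝ, Continuous fun t : ℝ => Real.exp (s * t) := fun s =>
    Real.continuous_exp.comp (continuous_const.mul continuous_id)
  -- integrability of exp(lam * Y j)
  have hint : ∀ j, Integrable (fun θ => Real.exp (lam * Y j θ)) P := by
    intro j
    have h1 : Integrable (fun t => Real.exp ((lam * σ j ^ 2) * t)) (chiSqMeasure k) :=
      chiSq_exp_integrable k hk (hsj j)
    rw [← hdist j] at h1
    have h2 := (integrable_map_measure
      ((hcont _).aestronglyMeasurable) (hmeas j).aemeasurable).mp h1
    have h3 : ((fun t => Real.exp ((lam * σ j ^ 2) * t)) ∘ X j)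
        = fun θ => Real.exp (lam * Y j θ) := by
      funext θ; simp [hY_def, Function.comp, mul_assoc]
    rwa [h3] at h2
  -- the mgf of each Y j
  have hmgf : ∀ j, mgf (Y j) P lam = (1 - 2*(lam * σ j ^ 2)) ^ (-((k:ℝ)/2)) := by
    intro j
    have hmap := integral_map (μ := P) (hmeas j).aemeasurable
      (f := fun t => Real.exp ((lam * σ j ^ 2) * t)) ((hcont _).aestronglyMeasurable)
    rw [hdist j] at hmap
    have e1 : mgf (Y j) P lam = ∫ θ, Real.exp ((lam * σ j ^ 2) * X j θ) ∂P := by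
      rw [mgf]
      congr 1; funext θ; simp [hY_def, Function.comp, mul_assoc]
    rw [e1, ← hmap]
    exact chiSq_exp_integral k hk (hsj j)
  -- Chernoff
  have hintZ : Integrable (fun θ => Real.exp (lam * (∑ j, Y j) θ)) P :=
    hYindep.integrable_exp_mul_sum hYmeas (fun j _ => hint j)
  have hchern := measure_ge_le_exp_mul_mgf (X := ∑ j, Y j) (μ := P)
    ((k:ℝ) * (τ^2 * S)) hlam.le hintZ
  rw [hYindep.mgf_sum hYmeas Finset.univ] at hchern
  -- bound the product of mgfs
  have hprod : ∏ j, mgf (Y j) P lam ≤ Real.exp ((k:ℝ) * τ * lam * S) := by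
    calc ∏ j, mgf (Y j) P lam
        = ∏ j, (1 - 2*(lam * σ j ^ 2)) ^ (-((k:ℝ)/2)) :=
          Finset.prod_congr rfl fun j _ => hmgf j
      _ ≤ ∏ j, Real.exp ((k:ℝ)/2 * (τ * (2*(lam * σ j ^ 2)))) := by
          refine Finset.prod_le_prod (fun j _ => Real.rpow_nonneg (by linarith [hsj j]) _)
            (fun j _ => ?_)
          refine rpow_neg_le_exp_aux (by positivity) hτ0 (by linarith [hsj0 j]) ?_
          have h1 := hsj_le j
          rw [hτdiv] at h1
          linarith
      _ = Real.exp (∑ j, (k:ℝ)/2 * (τ * (2*(lam * σ j ^ 2)))) := (Real.exp_sum _ _).symm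
      _ = Real.exp ((k:ℝ) * τ * lam * S) := by
          congr 1
          rw [hS, Finset.mul_sum]
          exact Finset.sum_congr rfl fun j _ => by ring
  -- identify the event
  have hset : {θ | (1 / (k : ℝ)) * ∑ j, σ j ^ 2 * X j θ ≥ τ ^ 2 * S}
      = {θ | (k:ℝ) * (τ^2 * S) ≤ (∑ j, Y j) θ} := by
    ext θ
    simp only [Set.mem_setOf_eq, Finset.sum_apply]
    have hYj : ∀ j, Y j θ = σ j ^ 2 * X j θ := fun j => rfl
    simp_rw [hYj]
    rw [ge_iff_le, one_div, inv_mul_eq_div, le_div_iff₀ hk0]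
    constructor <;> intro h <;> linarith [mul_comm ((τ:ℝ)^2 * S) ((k:ℝ))]
  rw [hset]
  -- conclude
  have hfinal : Real.exp (-lam * ((k:ℝ) * (τ^2 * S))) * Real.exp ((k:ℝ) * τ * lam * S)
      = Real.exp (-(k : ℝ) / 2 * ρ * (τ - 1) ^ 2) := by
    rw [← Real.exp_add]
    congr 1
    rw [hρ, hlam_def]
    field_simp
    ring
  have hreal : (P {θ | (k:ℝ) * (τ^2 * S) ≤ (∑ j, Y j) θ}).toReal
      ≤ Real.exp (-(k : ℝ) / 2 * ρ * (τ - 1) ^ 2) := by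
    refine le_trans hchern ?_
    rw [← hfinal]
    exact mul_le_mul_of_nonneg_left hprod (Real.exp_pos _).le
  calc P {θ | (k:ℝ) * (τ^2 * S) ≤ (∑ j, Y j) θ}
      = ENNReal.ofReal (P {θ | (k:ℝ) * (τ^2 * S) ≤ (∑ j, Y j) θ}).toReal :=
        (ENNReal.ofReal_toReal (measure_ne_top P _)).symm
    _ ≤ ENNReal.ofReal (Real.exp (-(k : ℝ) / 2 * ρ * (τ - 1) ^ 2)) :=
        ENNReal.ofReal_le_ofReal hreal
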